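/- arXiv:math/0703568 — 4 statements merged into one kernel-verified Lean document; each statement's English description precedes it below -/
import Mathlib

section
/- In the preprojective algebra Π(E_6), the element z_6 = a_1a_2x_3a_2^*a_1^* − a_2x_3^2a_2^* − x_5x_3x_5 + a_3x_2^2a_3^* − a_4a_3x_2a_3^*a_4^* lies in the center of Π(E_6), i.e. z_6·y = y·z_6 for all y ∈ Π(E_6). -/
/-- Generators of the preprojective algebra of `E₆`: idempotents `e i` for the six
vertices, arrows `a i` and reversed arrows `astar i` for the five edges. -/
inductive E6Gen : Type
  | e : Fin 6 → E6Gen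
  | a : Fin 5 → E6Gen
  | astar : Fin 5 → E6Gen

namespace E6

/-- The trivial-path generators inside the free algebra. -/
noncomputable def E (i : Fin 6) : FreeAlgebra ℂ E6Gen := FreeAlgebra.ι ℂ (E6Gen.e i)

/-- The arrow generators inside the free algebra. -/
noncomputable def A (i : Fin 5) : FreeAlgebra ℂ E6Gen := FreeAlgebra.ι ℂ (E6Gen.a i)

/-- The reversed-arrow generators inside the free algebra. -/
noncomputable def S (i : Fin 5) : FreeAlgebra ℂ E6Gen := FreeAlgebra.ι ℂ (E6Gen.astar i)

/-- Sources of the arrows `a₁ : 1 → 2`, `a₂ : 2 → 3`, `a₃ : 4 → 3`, `a₄ : 5 → 4`,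
`a₅ : 6 → 3` (vertices are `0`-indexed). -/
def src : Fin 5 → Fin 6 := ![0, 1, 3, 4, 5]

/-- Targets of the arrows of the `E₆` quiver (vertices are `0`-indexed). -/
def tgt : Fin 5 → Fin 6 := ![1, 2, 2, 3, 2]

/-- The defining relations of the preprojective algebra `Π(E₆)`. -/
inductive Rel : FreeAlgebra ℂ E6Gen → FreeAlgebra ℂ E6Gen → Prop
  | orth (i j : Fin 6) : Rel (E i * E j) (if i = j then E i else 0)
  | sum_eq_one : Rel (∑ i, E i) 1
  | arrow_left (i : Fin 5) : Rel (E (src i) * A i) (A i)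
  | arrow_right (i : Fin 5) : Rel (A i * E (tgt i)) (A i)
  | star_left (i : Fin 5) : Rel (E (tgt i) * S i) (S i)
  | star_right (i : Fin 5) : Rel (S i * E (src i)) (S i)
  | preproj : Rel (∑ i, (A i * S i - S i * A i)) 0

end E6

/-- The preprojective algebra `Π(E₆)`: the quotient of the free `ℂ`-algebra on the
generators by the two-sided ideal generated by the defining relations. -/
abbrev PiE6 : Type := RingQuot E6.Rel

/-- The arrow `aᵢ` in `Π(E₆)` (`0`-indexed: `pa 0 = a₁`, …, `pa 4 = a₅`). -/
noncomputable def pa (i : Fin 5) : PiE6 := RingQuot.mkAlgHom ℂ E6.Rel (E6.A i)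

/-- The reversed arrow `aᵢ*` in `Π(E₆)` (`0`-indexed). -/
noncomputable def ps (i : Fin 5) : PiE6 := RingQuot.mkAlgHom ℂ E6.Rel (E6.S i)

/-- The element `xᵢ = aᵢ* aᵢ` in `Π(E₆)` (`0`-indexed: `px 0 = x₁`, …, `px 4 = x₅`). -/
noncomputable def px (i : Fin 5) : PiE6 := ps i * pa i

/-- `z₆ = a₁a₂x₃a₂*a₁* − a₂x₃²a₂* − x₅x₃x₅ + a₃x₂²a₃* − a₄a₃x₂a₃*a₄*`. -/
noncomputable def z6 : PiE6 :=
  pa 0 * pa 1 * px 2 * ps 1 * ps 0 - pa 1 * px 2 ^ 2 * ps 1 - px 4 * px 2 * px 4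
    + pa 2 * px 1 ^ 2 * ps 2 - pa 3 * pa 2 * px 1 * ps 2 * ps 3

/-- `z₈ = −a₂x₅x₃x₅a₂* − x₅x₃²x₅ − a₃x₅x₂x₅a₃*`. -/
noncomputable def z8 : PiE6 :=
  -(pa 1 * px 4 * px 2 * px 4 * ps 1) - px 4 * px 2 ^ 2 * px 4
    - pa 2 * px 4 * px 1 * px 4 * ps 2

namespace E6C

/-- The idempotent `eᵢ` in `Π(E₆)`. -/
noncomputable def pe (i : Fin 6) : PiE6 := RingQuot.mkAlgHom ℂ E6.Rel (E6.E i)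

@[simp] lemma src0 : E6.src 0 = 0 := rfl
@[simp] lemma src1 : E6.src 1 = 1 := rfl
@[simp] lemma src2 : E6.src 2 = 3 := rfl
@[simp] lemma src3 : E6.src 3 = 4 := rfl
@[simp] lemma src4 : E6.src 4 = 5 := rfl
@[simp] lemma tgt0 : E6.tgt 0 = 1 := rfl
@[simp] lemma tgt1 : E6.tgt 1 = 2 := rfl
@[simp] lemma tgt2 : E6.tgt 2 = 2 := rfl
@[simp] lemma tgt3 : E6.tgt 3 = 3 := rfl
@[simp] lemma tgt4 : E6.tgt 4 = 2 := rfl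

lemma nmul (x y : PiE6) : -x * y = -(x * y) := by
  have h := add_mul (-x) x y
  rw [neg_add_cancel, zero_mul] at h
  exact eq_neg_of_add_eq_zero_left h.symm

lemma muln (x y : PiE6) : x * -y = -(x * y) := by
  have h := mul_add x (-y) y
  rw [neg_add_cancel, mul_zero] at h
  exact eq_neg_of_add_eq_zero_left h.symm

lemma pe_pe (i j : Fin 6) : pe i * pe j = if i = j then pe i else 0 := by
  have h := RingQuot.mkAlgHom_rel ℂ (E6.Rel.orth i j)
  rw [map_mul] at h
  rw [pe, pe, h]
  split_ifs <;> simp [pe]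

lemma arrow_left (i : Fin 5) : pe (E6.src i) * pa i = pa i := by
  have h := RingQuot.mkAlgHom_rel ℂ (E6.Rel.arrow_left i)
  rw [map_mul] at h; exact h

lemma arrow_right (i : Fin 5) : pa i * pe (E6.tgt i) = pa i := by
  have h := RingQuot.mkAlgHom_rel ℂ (E6.Rel.arrow_right i)
  rw [map_mul] at h; exact h

lemma star_left (i : Fin 5) : pe (E6.tgt i) * ps i = ps i := by
  have h := RingQuot.mkAlgHom_rel ℂ (E6.Rel.star_left i)
  rw [map_mul] at h; exact h

lemma star_right (i : Fin 5) : ps i * pe (E6.src i) = ps i := by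
  have h := RingQuot.mkAlgHom_rel ℂ (E6.Rel.star_right i)
  rw [map_mul] at h; exact h

lemma preproj : (∑ i, (pa i * ps i - ps i * pa i)) = 0 := by
  have h := RingQuot.mkAlgHom_rel ℂ E6.Rel.preproj
  simpa [pa, ps] using h

lemma pe_pa (v : Fin 6) (i : Fin 5) : pe v * pa i = if v = E6.src i then pa i else 0 := by
  by_cases h : v = E6.src i
  · subst h; simp [arrow_left]
  · rw [if_neg h, ← arrow_left i, ← mul_assoc, pe_pe, if_neg h, zero_mul]

lemma pa_pe (v : Fin 6) (i : Fin 5) : pa i * pe v = if E6.tgt i = v then pa i else 0 := by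
  by_cases h : E6.tgt i = v
  · subst h; simp [arrow_right]
  · rw [if_neg h, ← arrow_right i, mul_assoc, pe_pe, if_neg h, mul_zero]

lemma pe_ps (v : Fin 6) (i : Fin 5) : pe v * ps i = if v = E6.tgt i then ps i else 0 := by
  by_cases h : v = E6.tgt i
  · subst h; simp [star_left]
  · rw [if_neg h, ← star_left i, ← mul_assoc, pe_pe, if_neg h, zero_mul]

lemma ps_pe (v : Fin 6) (i : Fin 5) : ps i * pe v = if E6.src i = v then ps i else 0 := by
  by_cases h : E6.src i = v
  · subst h; simp [star_right]
  · rw [if_neg h, ← star_right i, mul_assoc, pe_pe, if_neg h, mul_zero]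


lemma pe_pa' (v : Fin 6) (i : Fin 5) (y : PiE6) :
    pe v * (pa i * y) = if v = E6.src i then pa i * y else 0 := by
  rw [← mul_assoc, pe_pa]; split_ifs <;> simp

lemma pe_ps' (v : Fin 6) (i : Fin 5) (y : PiE6) :
    pe v * (ps i * y) = if v = E6.tgt i then ps i * y else 0 := by
  rw [← mul_assoc, pe_ps]; split_ifs <;> simp

lemma vrel (v : Fin 6) : pe v * (∑ i, (pa i * ps i - ps i * pa i)) * pe v = 0 := by
  rw [preproj, mul_zero, zero_mul]

lemma V0 : pa 0 * ps 0 = 0 := by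
  have h := vrel 0
  simpa [Fin.sum_univ_five, mul_sub, sub_mul, mul_add, add_mul, nmul, muln, mul_assoc, pe_pa, pa_pe, pe_ps, ps_pe, pe_pa', pe_ps'] using h

lemma V1 : pa 1 * ps 1 = px 0 := by
  have h := vrel 1
  simp [Fin.sum_univ_five, mul_sub, sub_mul, mul_add, add_mul, nmul, muln, mul_assoc, pe_pa, pa_pe, pe_ps, ps_pe, pe_pa', pe_ps', px] at h
  rw [px]; exact sub_eq_zero.mp h

lemma V2 : px 1 + px 2 + px 4 = 0 := by
  have h := vrel 2
  simp [Fin.sum_univ_five, mul_sub, sub_mul, mul_add, add_mul, nmul, muln, mul_assoc, pe_pa, pa_pe, pe_ps, ps_pe, pe_pa', pe_ps', px] at h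
  rw [px, px, px, ← neg_eq_zero]
  rw [← h]
  abel

lemma V3 : pa 2 * ps 2 = px 3 := by
  have h := vrel 3
  simp [Fin.sum_univ_five, mul_sub, sub_mul, mul_add, add_mul, nmul, muln, mul_assoc, pe_pa, pa_pe, pe_ps, ps_pe, pe_pa', pe_ps', px] at h
  rw [px]; exact sub_eq_zero.mp h

lemma V4 : pa 3 * ps 3 = 0 := by
  have h := vrel 4
  simpa [Fin.sum_univ_five, mul_sub, sub_mul, mul_add, add_mul, nmul, muln, mul_assoc, pe_pa, pa_pe, pe_ps, ps_pe, pe_pa', pe_ps'] using h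

lemma V5 : pa 4 * ps 4 = 0 := by
  have h := vrel 5
  simpa [Fin.sum_univ_five, mul_sub, sub_mul, mul_add, add_mul, nmul, muln, mul_assoc, pe_pa, pa_pe, pe_ps, ps_pe, pe_pa', pe_ps'] using h


/-- `Loc u v x` means `x` is a linear combination of paths from vertex `u` to vertex `v`. -/
def Loc (u v : Fin 6) (x : PiE6) : Prop := pe u * x = x ∧ x * pe v = x

lemma loc_pa (i : Fin 5) : Loc (E6.src i) (E6.tgt i) (pa i) := ⟨arrow_left i, arrow_right i⟩
lemma loc_ps (i : Fin 5) : Loc (E6.tgt i) (E6.src i) (ps i) := ⟨star_left i, star_right i⟩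

lemma loc_mul {u v w : Fin 6} {x y : PiE6} (hx : Loc u v x) (hy : Loc v w y) :
    Loc u w (x * y) :=
  ⟨by rw [← mul_assoc, hx.1], by rw [mul_assoc, hy.2]⟩

lemma loc_px (i : Fin 5) : Loc (E6.tgt i) (E6.tgt i) (px i) := loc_mul (loc_ps i) (loc_pa i)

lemma mul_orth {u v u' v' : Fin 6} {x y : PiE6} (hx : Loc u v x) (hy : Loc u' v' y)
    (h : v ≠ u') : x * y = 0 := by
  rw [← hx.2, ← hy.1, mul_assoc, ← mul_assoc (pe v), pe_pe, if_neg h, zero_mul, mul_zero]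

lemma pe_comm {v : Fin 6} {x : PiE6} (hx : Loc v v x) (w : Fin 6) : pe w * x = x * pe w := by
  by_cases h : w = v
  · subst h; rw [hx.1, hx.2]
  · have h1 : pe w * x = 0 := by rw [← hx.1, ← mul_assoc, pe_pe, if_neg h, zero_mul]
    have h2 : x * pe w = 0 := by
      rw [← hx.2, mul_assoc, pe_pe, if_neg (fun hh => h hh.symm), mul_zero]
    rw [h1, h2]

-- concrete locations
lemma loc_pa0 : Loc 0 1 (pa 0) := loc_pa 0
lemma loc_pa1 : Loc 1 2 (pa 1) := loc_pa 1
lemma loc_pa2 : Loc 3 2 (pa 2) := loc_pa 2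
lemma loc_pa3 : Loc 4 3 (pa 3) := loc_pa 3
lemma loc_pa4 : Loc 5 2 (pa 4) := loc_pa 4
lemma loc_ps0 : Loc 1 0 (ps 0) := loc_ps 0
lemma loc_ps1 : Loc 2 1 (ps 1) := loc_ps 1
lemma loc_ps2 : Loc 2 3 (ps 2) := loc_ps 2
lemma loc_ps3 : Loc 3 4 (ps 3) := loc_ps 3
lemma loc_ps4 : Loc 2 5 (ps 4) := loc_ps 4
lemma loc_px0 : Loc 1 1 (px 0) := loc_px 0
lemma loc_px1 : Loc 2 2 (px 1) := loc_px 1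
lemma loc_px2 : Loc 2 2 (px 2) := loc_px 2
lemma loc_px3 : Loc 3 3 (px 3) := loc_px 3
lemma loc_px4 : Loc 2 2 (px 4) := loc_px 4

/-- The five terms of `z₆`. -/
noncomputable def T1 : PiE6 := pa 0 * pa 1 * px 2 * ps 1 * ps 0
noncomputable def T2 : PiE6 := pa 1 * px 2 ^ 2 * ps 1
noncomputable def T3 : PiE6 := px 4 * px 2 * px 4
noncomputable def T4 : PiE6 := pa 2 * px 1 ^ 2 * ps 2
noncomputable def T5 : PiE6 := pa 3 * pa 2 * px 1 * ps 2 * ps 3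

lemma z6_def : z6 = T1 - T2 - T3 + T4 - T5 := rfl

lemma loc_T1 : Loc 0 0 T1 :=
  loc_mul (loc_mul (loc_mul (loc_mul loc_pa0 loc_pa1) loc_px2) loc_ps1) loc_ps0
lemma loc_T2 : Loc 1 1 T2 := by
  have : T2 = pa 1 * (px 2 * px 2) * ps 1 := by rw [T2, sq]
  rw [this]
  exact loc_mul (loc_mul loc_pa1 (loc_mul loc_px2 loc_px2)) loc_ps1
lemma loc_T3 : Loc 2 2 T3 := loc_mul (loc_mul loc_px4 loc_px2) loc_px4
lemma loc_T4 : Loc 3 3 T4 := by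
  have : T4 = pa 2 * (px 1 * px 1) * ps 2 := by rw [T4, sq]
  rw [this]
  exact loc_mul (loc_mul loc_pa2 (loc_mul loc_px1 loc_px1)) loc_ps2
lemma loc_T5 : Loc 4 4 T5 :=
  loc_mul (loc_mul (loc_mul (loc_mul loc_pa3 loc_pa2) loc_px1) loc_ps2) loc_ps3

lemma comm_pe (w : Fin 6) : z6 * pe w = pe w * z6 := by
  rw [z6_def]
  simp only [sub_mul, add_mul, mul_sub, mul_add]
  rw [pe_comm loc_T1 w, pe_comm loc_T2 w, pe_comm loc_T3 w, pe_comm loc_T4 w, pe_comm loc_T5 w]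

-- Derived relations
lemma A1S1 : pa 1 * ps 1 = px 0 := V1
lemma A2S2 : pa 2 * ps 2 = px 3 := V3

lemma x00 : px 0 * px 0 = 0 := by
  calc px 0 * px 0 = ps 0 * (pa 0 * ps 0) * pa 0 := by rw [px]; noncomm_ring [nmul, muln]
  _ = 0 := by rw [V0, mul_zero, zero_mul]

lemma x33 : px 3 * px 3 = 0 := by
  calc px 3 * px 3 = ps 3 * (pa 3 * ps 3) * pa 3 := by rw [px]; noncomm_ring [nmul, muln]
  _ = 0 := by rw [V4, mul_zero, zero_mul]

lemma x44 : px 4 * px 4 = 0 := by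
  calc px 4 * px 4 = ps 4 * (pa 4 * ps 4) * pa 4 := by rw [px]; noncomm_ring [nmul, muln]
  _ = 0 := by rw [V5, mul_zero, zero_mul]

lemma a0x : pa 0 * px 0 = 0 := by rw [px, ← mul_assoc, V0, zero_mul]
lemma xs0 : px 0 * ps 0 = 0 := by rw [px, mul_assoc, V0, mul_zero]
lemma a3x : pa 3 * px 3 = 0 := by rw [px, ← mul_assoc, V4, zero_mul]
lemma xs3 : px 3 * ps 3 = 0 := by rw [px, mul_assoc, V4, mul_zero]
lemma a4x : pa 4 * px 4 = 0 := by rw [px, ← mul_assoc, V5, zero_mul]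
lemma xs4 : px 4 * ps 4 = 0 := by rw [px, mul_assoc, V5, mul_zero]
lemma a1x : pa 1 * px 1 = px 0 * pa 1 := by rw [px, ← mul_assoc, V1]
lemma xs1 : px 1 * ps 1 = ps 1 * px 0 := by rw [px, mul_assoc, V1]
lemma a2x : pa 2 * px 2 = px 3 * pa 2 := by rw [px, ← mul_assoc, V3]
lemma xs2 : px 2 * ps 2 = ps 2 * px 3 := by rw [px, mul_assoc, V3]

lemma q3 : px 2 * px 2 * px 2 = 0 := by
  calc px 2 * px 2 * px 2 = ps 2 * ((pa 2 * ps 2) * ((pa 2 * ps 2) * pa 2)) := by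
        rw [px]; noncomm_ring [nmul, muln]
  _ = ps 2 * ((px 3 * px 3) * pa 2) := by rw [V3]; noncomm_ring [nmul, muln]
  _ = 0 := by rw [x33, zero_mul, mul_zero]

lemma p3 : px 1 * px 1 * px 1 = 0 := by
  calc px 1 * px 1 * px 1 = ps 1 * ((pa 1 * ps 1) * ((pa 1 * ps 1) * pa 1)) := by
        rw [px]; noncomm_ring [nmul, muln]
  _ = ps 1 * ((px 0 * px 0) * pa 1) := by rw [V1]; noncomm_ring [nmul, muln]
  _ = 0 := by rw [x00, zero_mul, mul_zero]

lemma hp1 : px 1 = -px 2 - px 4 := by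
  have h := V2
  rw [add_assoc] at h
  rw [eq_neg_of_add_eq_zero_left h]
  abel

lemma hp2 : px 2 = -px 1 - px 4 := by
  have h : px 2 + (px 1 + px 4) = 0 := by rw [← V2]; abel
  rw [eq_neg_of_add_eq_zero_left h]
  abel

lemma hsum : px 1 + px 2 = -px 4 := by rw [hp1]; abel
lemma hpr : px 1 + px 4 = -px 2 := by rw [hp1]; abel

-- cons versions
lemma x00' (y : PiE6) : px 0 * (px 0 * y) = 0 := by rw [← mul_assoc, x00, zero_mul]
lemma x33' (y : PiE6) : px 3 * (px 3 * y) = 0 := by rw [← mul_assoc, x33, zero_mul]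
lemma x44' (y : PiE6) : px 4 * (px 4 * y) = 0 := by rw [← mul_assoc, x44, zero_mul]
lemma a0x' (y : PiE6) : pa 0 * (px 0 * y) = 0 := by rw [← mul_assoc, a0x, zero_mul]
lemma xs0' (y : PiE6) : px 0 * (ps 0 * y) = 0 := by rw [← mul_assoc, xs0, zero_mul]
lemma a3x' (y : PiE6) : pa 3 * (px 3 * y) = 0 := by rw [← mul_assoc, a3x, zero_mul]
lemma xs3' (y : PiE6) : px 3 * (ps 3 * y) = 0 := by rw [← mul_assoc, xs3, zero_mul]
lemma a4x' (y : PiE6) : pa 4 * (px 4 * y) = 0 := by rw [← mul_assoc, a4x, zero_mul]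
lemma xs4' (y : PiE6) : px 4 * (ps 4 * y) = 0 := by rw [← mul_assoc, xs4, zero_mul]
lemma a1x' (y : PiE6) : pa 1 * (px 1 * y) = px 0 * (pa 1 * y) := by
  rw [← mul_assoc, a1x, mul_assoc]
lemma xs1' (y : PiE6) : px 1 * (ps 1 * y) = ps 1 * (px 0 * y) := by
  rw [← mul_assoc, xs1, mul_assoc]
lemma a2x' (y : PiE6) : pa 2 * (px 2 * y) = px 3 * (pa 2 * y) := by
  rw [← mul_assoc, a2x, mul_assoc]
lemma xs2' (y : PiE6) : px 2 * (ps 2 * y) = ps 2 * (px 3 * y) := by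
  rw [← mul_assoc, xs2, mul_assoc]
lemma q3' (y : PiE6) : px 2 * (px 2 * (px 2 * y)) = 0 := by
  rw [← mul_assoc, ← mul_assoc, q3, zero_mul]
lemma p3' (y : PiE6) : px 1 * (px 1 * (px 1 * y)) = 0 := by
  rw [← mul_assoc, ← mul_assoc, p3, zero_mul]

-- small word identities in the loop algebra at the central vertex
lemma q3r : px 2 * (px 2 * px 2) = 0 := by rw [← mul_assoc, q3]
lemma p3r : px 1 * (px 1 * px 1) = 0 := by rw [← mul_assoc, p3]

lemma w1 : px 2 * px 4 = -(px 1 * px 4) := by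
  rw [hp2]; noncomm_ring [nmul, muln, x44]
lemma w2 : px 4 * px 2 = -(px 4 * px 1) := by
  rw [hp2]; noncomm_ring [nmul, muln, x44]
lemma w1' (y : PiE6) : px 2 * (px 4 * y) = -(px 1 * (px 4 * y)) := by
  rw [← mul_assoc, ← mul_assoc, w1, nmul]
lemma w2' (y : PiE6) : px 4 * (px 2 * y) = -(px 4 * (px 1 * y)) := by
  rw [← mul_assoc, ← mul_assoc, w2, nmul]

-- Core commutation identities
lemma core_pa0 : T1 * pa 0 + pa 0 * T2 = 0 := by
  calc T1 * pa 0 + pa 0 * T2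
      = pa 0 * pa 1 * px 2 * (ps 1 * px 0) + pa 0 * (pa 1 * (px 2 * px 2 * ps 1)) := by
        simp only [T1, T2, px, sq]; noncomm_ring [nmul, muln]
    _ = pa 0 * pa 1 * px 2 * (px 1 * ps 1) + pa 0 * (pa 1 * (px 2 * px 2 * ps 1)) := by
        rw [← xs1]
    _ = pa 0 * (pa 1 * (px 2 * ((px 1 + px 2) * ps 1))) := by noncomm_ring [nmul, muln]
    _ = pa 0 * (pa 1 * (px 2 * (-px 4 * ps 1))) := by rw [hsum]
    _ = -(pa 0 * (pa 1 * ((px 2 * px 4) * ps 1))) := by noncomm_ring [nmul, muln]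
    _ = -(pa 0 * (pa 1 * (-(px 1 * px 4) * ps 1))) := by rw [w1]
    _ = pa 0 * (pa 1 * px 1) * (px 4 * ps 1) := by noncomm_ring [nmul, muln]
    _ = pa 0 * (px 0 * pa 1) * (px 4 * ps 1) := by rw [a1x]
    _ = pa 0 * (px 0 * (pa 1 * (px 4 * ps 1))) := by noncomm_ring [nmul, muln]
    _ = 0 := a0x' _

lemma core_ps0 : ps 0 * T1 + T2 * ps 0 = 0 := by
  calc ps 0 * T1 + T2 * ps 0
      = px 0 * pa 1 * (px 2 * (ps 1 * ps 0)) + pa 1 * (px 2 * (px 2 * (ps 1 * ps 0))) := by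
        simp only [T1, T2, px, sq]; noncomm_ring [nmul, muln]
    _ = pa 1 * px 1 * (px 2 * (ps 1 * ps 0)) + pa 1 * (px 2 * (px 2 * (ps 1 * ps 0))) := by
        rw [← a1x]
    _ = pa 1 * ((px 1 + px 2) * (px 2 * (ps 1 * ps 0))) := by noncomm_ring [nmul, muln]
    _ = pa 1 * (-px 4 * (px 2 * (ps 1 * ps 0))) := by rw [hsum]
    _ = -(pa 1 * ((px 4 * px 2) * (ps 1 * ps 0))) := by noncomm_ring [nmul, muln]
    _ = -(pa 1 * (-(px 4 * px 1) * (ps 1 * ps 0))) := by rw [w2]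
    _ = pa 1 * (px 4 * ((px 1 * ps 1) * ps 0)) := by noncomm_ring [nmul, muln]
    _ = pa 1 * (px 4 * ((ps 1 * px 0) * ps 0)) := by rw [xs1]
    _ = pa 1 * px 4 * ps 1 * (px 0 * ps 0) := by noncomm_ring [nmul, muln]
    _ = 0 := by rw [xs0, mul_zero]

lemma core_pa1 : T2 * pa 1 = pa 1 * T3 := by
  calc T2 * pa 1
      = pa 1 * (px 2 * (px 2 * px 1)) := by
        simp only [T2, px, sq]; noncomm_ring [nmul, muln]
    _ = pa 1 * (px 2 * (px 2 * (-px 2 - px 4))) := by rw [hp1]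
    _ = -(pa 1 * (px 2 * (px 2 * px 2))) - pa 1 * (px 2 * (px 2 * px 4)) := by
        noncomm_ring [nmul, muln]
    _ = -(pa 1 * (px 2 * (px 2 * px 4))) := by
        rw [q3r, mul_zero, neg_zero, zero_sub]
    _ = -(pa 1 * (px 2 * (-(px 1 * px 4)))) := by rw [w1]
    _ = pa 1 * (px 2 * (px 1 * px 4)) := by noncomm_ring [nmul, muln]
    _ = pa 1 * ((-px 1 - px 4) * (px 1 * px 4)) := by rw [hp2]
    _ = -(pa 1 * (px 1 * (px 1 * px 4))) - pa 1 * (px 4 * (px 1 * px 4)) := by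
        noncomm_ring [nmul, muln]
    _ = -(px 0 * (px 0 * (pa 1 * px 4))) - pa 1 * (px 4 * (px 1 * px 4)) := by
        rw [a1x', a1x']
    _ = -(pa 1 * (px 4 * (px 1 * px 4))) := by rw [x00']; noncomm_ring [nmul, muln]
    _ = pa 1 * (px 4 * (-(px 1 * px 4))) := by noncomm_ring [nmul, muln]
    _ = pa 1 * (px 4 * (px 2 * px 4)) := by rw [← w1]
    _ = pa 1 * T3 := by simp only [T3]; noncomm_ring [nmul, muln]

lemma core_ps1 : T3 * ps 1 = ps 1 * T2 := by
  symm
  calc ps 1 * T2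
      = px 1 * (px 2 * (px 2 * ps 1)) := by
        simp only [T2, px, sq]; noncomm_ring [nmul, muln]
    _ = (-px 2 - px 4) * (px 2 * (px 2 * ps 1)) := by rw [hp1]
    _ = -(px 2 * (px 2 * (px 2 * ps 1))) - px 4 * (px 2 * (px 2 * ps 1)) := by
        noncomm_ring [nmul, muln]
    _ = -(px 4 * (px 2 * (px 2 * ps 1))) := by rw [q3', neg_zero, zero_sub]
    _ = px 4 * (px 1 * (px 2 * ps 1)) := by rw [w2', neg_neg]
    _ = px 4 * (px 1 * ((-px 1 - px 4) * ps 1)) := by rw [hp2]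
    _ = -(px 4 * (px 1 * (px 1 * ps 1))) - px 4 * (px 1 * (px 4 * ps 1)) := by
        noncomm_ring [nmul, muln]
    _ = -(px 4 * (px 1 * (ps 1 * px 0))) - px 4 * (px 1 * (px 4 * ps 1)) := by rw [xs1]
    _ = -(px 4 * (ps 1 * (px 0 * px 0))) - px 4 * (px 1 * (px 4 * ps 1)) := by rw [xs1']
    _ = -(px 4 * (px 1 * (px 4 * ps 1))) := by rw [x00, mul_zero]; noncomm_ring [nmul, muln]
    _ = px 4 * (-(px 1 * (px 4 * ps 1))) := by noncomm_ring [nmul, muln]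
    _ = px 4 * (px 2 * (px 4 * ps 1)) := by rw [← w1']
    _ = T3 * ps 1 := by simp only [T3]; noncomm_ring [nmul, muln]

lemma core_pa2 : T4 * pa 2 + pa 2 * T3 = 0 := by
  have m1 : px 1 * (px 1 * px 2) = -(px 1 * (px 1 * px 4)) := by
    rw [hp2]; noncomm_ring [nmul, muln, p3r, p3']
  have m2 : px 4 * (px 2 * px 4) = -(px 4 * (px 1 * px 4)) := by
    rw [w1]; noncomm_ring [nmul, muln]
  calc T4 * pa 2 + pa 2 * T3
      = pa 2 * (px 1 * (px 1 * px 2)) + pa 2 * (px 4 * (px 2 * px 4)) := by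
        simp only [T4, T3, px, sq]; noncomm_ring [nmul, muln]
    _ = pa 2 * (-(px 1 * (px 1 * px 4))) + pa 2 * (-(px 4 * (px 1 * px 4))) := by
        rw [m1, m2]
    _ = -(pa 2 * ((px 1 + px 4) * (px 1 * px 4))) := by noncomm_ring [nmul, muln]
    _ = -(pa 2 * (-px 2 * (px 1 * px 4))) := by rw [hpr]
    _ = pa 2 * (px 2 * (px 1 * px 4)) := by noncomm_ring [nmul, muln]
    _ = px 3 * (pa 2 * (px 1 * px 4)) := by rw [a2x']
    _ = px 3 * (pa 2 * ((-px 2 - px 4) * px 4)) := by rw [hp1]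
    _ = -(px 3 * (pa 2 * (px 2 * px 4))) := by noncomm_ring [nmul, muln, x44]
    _ = -(px 3 * (px 3 * (pa 2 * px 4))) := by rw [a2x']
    _ = 0 := by rw [x33', neg_zero]

lemma core_ps2 : T3 * ps 2 + ps 2 * T4 = 0 := by
  have m1 : px 2 * (px 1 * (px 1 * ps 2)) = -(px 4 * (px 1 * (px 1 * ps 2))) := by
    rw [hp2]; noncomm_ring [nmul, muln, p3']
  calc T3 * ps 2 + ps 2 * T4
      = px 4 * (px 2 * (px 4 * ps 2)) + px 2 * (px 1 * (px 1 * ps 2)) := by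
        simp only [T3, T4, px, sq]; noncomm_ring [nmul, muln]
    _ = px 4 * (-(px 1 * (px 4 * ps 2))) + -(px 4 * (px 1 * (px 1 * ps 2))) := by
        rw [w1', m1]
    _ = -(px 4 * (px 1 * ((px 1 + px 4) * ps 2))) := by noncomm_ring [nmul, muln]
    _ = -(px 4 * (px 1 * (-px 2 * ps 2))) := by rw [hpr]
    _ = px 4 * (px 1 * (px 2 * ps 2)) := by noncomm_ring [nmul, muln]
    _ = px 4 * (px 1 * (ps 2 * px 3)) := by rw [xs2]
    _ = px 4 * ((-px 2 - px 4) * (ps 2 * px 3)) := by rw [hp1]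
    _ = -(px 4 * (px 2 * (ps 2 * px 3))) := by noncomm_ring [nmul, muln, x44']
    _ = -(px 4 * (ps 2 * (px 3 * px 3))) := by rw [xs2']
    _ = 0 := by rw [x33, mul_zero, mul_zero, neg_zero]

lemma core_pa3 : T5 * pa 3 + pa 3 * T4 = 0 := by
  calc T5 * pa 3 + pa 3 * T4
      = pa 3 * (pa 2 * (px 1 * (ps 2 * px 3))) + pa 3 * (pa 2 * (px 1 * (px 1 * ps 2))) := by
        simp only [T5, T4, px, sq]; noncomm_ring [nmul, muln]
    _ = pa 3 * (pa 2 * (px 1 * (px 2 * ps 2))) + pa 3 * (pa 2 * (px 1 * (px 1 * ps 2))) := by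
        rw [← xs2]
    _ = pa 3 * (pa 2 * (px 1 * ((px 1 + px 2) * ps 2))) := by noncomm_ring [nmul, muln]
    _ = pa 3 * (pa 2 * (px 1 * (-px 4 * ps 2))) := by rw [hsum]
    _ = -(pa 3 * (pa 2 * (px 1 * (px 4 * ps 2)))) := by noncomm_ring [nmul, muln]
    _ = -(pa 3 * (pa 2 * ((-px 2 - px 4) * (px 4 * ps 2)))) := by rw [hp1]
    _ = pa 3 * (pa 2 * (px 2 * (px 4 * ps 2))) := by noncomm_ring [nmul, muln, x44']
    _ = pa 3 * (px 3 * (pa 2 * (px 4 * ps 2))) := by rw [a2x']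
    _ = 0 := a3x' _

lemma core_ps3 : T4 * ps 3 + ps 3 * T5 = 0 := by
  calc T4 * ps 3 + ps 3 * T5
      = pa 2 * (px 1 * (px 1 * (ps 2 * ps 3))) + px 3 * (pa 2 * (px 1 * (ps 2 * ps 3))) := by
        simp only [T4, T5, px, sq]; noncomm_ring [nmul, muln]
    _ = pa 2 * (px 1 * (px 1 * (ps 2 * ps 3))) + pa 2 * (px 2 * (px 1 * (ps 2 * ps 3))) := by
        rw [← a2x']
    _ = pa 2 * ((px 1 + px 2) * (px 1 * (ps 2 * ps 3))) := by noncomm_ring [nmul, muln]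
    _ = pa 2 * (-px 4 * (px 1 * (ps 2 * ps 3))) := by rw [hsum]
    _ = -(pa 2 * (px 4 * (px 1 * (ps 2 * ps 3)))) := by noncomm_ring [nmul, muln]
    _ = -(pa 2 * (px 4 * ((-px 2 - px 4) * (ps 2 * ps 3)))) := by rw [hp1]
    _ = pa 2 * (px 4 * (px 2 * (ps 2 * ps 3))) := by noncomm_ring [nmul, muln, x44']
    _ = pa 2 * (px 4 * (ps 2 * (px 3 * ps 3))) := by rw [xs2']
    _ = 0 := by rw [xs3, mul_zero, mul_zero, mul_zero]

lemma comm_pa0 : z6 * pa 0 = pa 0 * z6 := by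
  rw [z6_def]
  simp only [sub_mul, add_mul, mul_sub, mul_add]
  rw [mul_orth loc_T2 loc_pa0 (by decide), mul_orth loc_T3 loc_pa0 (by decide),
    mul_orth loc_T4 loc_pa0 (by decide), mul_orth loc_T5 loc_pa0 (by decide),
    mul_orth loc_pa0 loc_T1 (by decide), mul_orth loc_pa0 loc_T3 (by decide),
    mul_orth loc_pa0 loc_T4 (by decide), mul_orth loc_pa0 loc_T5 (by decide),
    eq_neg_of_add_eq_zero_left core_pa0]
  abel

lemma comm_ps0 : z6 * ps 0 = ps 0 * z6 := by
  rw [z6_def]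
  simp only [sub_mul, add_mul, mul_sub, mul_add]
  rw [mul_orth loc_T1 loc_ps0 (by decide), mul_orth loc_T3 loc_ps0 (by decide),
    mul_orth loc_T4 loc_ps0 (by decide), mul_orth loc_T5 loc_ps0 (by decide),
    mul_orth loc_ps0 loc_T2 (by decide), mul_orth loc_ps0 loc_T3 (by decide),
    mul_orth loc_ps0 loc_T4 (by decide), mul_orth loc_ps0 loc_T5 (by decide),
    eq_neg_of_add_eq_zero_left core_ps0]
  abel

lemma comm_pa1 : z6 * pa 1 = pa 1 * z6 := by
  rw [z6_def]
  simp only [sub_mul, add_mul, mul_sub, mul_add]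
  rw [mul_orth loc_T1 loc_pa1 (by decide), mul_orth loc_T3 loc_pa1 (by decide),
    mul_orth loc_T4 loc_pa1 (by decide), mul_orth loc_T5 loc_pa1 (by decide),
    mul_orth loc_pa1 loc_T1 (by decide), mul_orth loc_pa1 loc_T2 (by decide),
    mul_orth loc_pa1 loc_T4 (by decide), mul_orth loc_pa1 loc_T5 (by decide),
    core_pa1]
  abel

lemma comm_ps1 : z6 * ps 1 = ps 1 * z6 := by
  rw [z6_def]
  simp only [sub_mul, add_mul, mul_sub, mul_add]
  rw [mul_orth loc_T1 loc_ps1 (by decide), mul_orth loc_T2 loc_ps1 (by decide),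
    mul_orth loc_T4 loc_ps1 (by decide), mul_orth loc_T5 loc_ps1 (by decide),
    mul_orth loc_ps1 loc_T1 (by decide), mul_orth loc_ps1 loc_T3 (by decide),
    mul_orth loc_ps1 loc_T4 (by decide), mul_orth loc_ps1 loc_T5 (by decide),
    core_ps1]
  abel

lemma comm_pa2 : z6 * pa 2 = pa 2 * z6 := by
  rw [z6_def]
  simp only [sub_mul, add_mul, mul_sub, mul_add]
  rw [mul_orth loc_T1 loc_pa2 (by decide), mul_orth loc_T2 loc_pa2 (by decide),
    mul_orth loc_T3 loc_pa2 (by decide), mul_orth loc_T5 loc_pa2 (by decide),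
    mul_orth loc_pa2 loc_T1 (by decide), mul_orth loc_pa2 loc_T2 (by decide),
    mul_orth loc_pa2 loc_T4 (by decide), mul_orth loc_pa2 loc_T5 (by decide),
    eq_neg_of_add_eq_zero_left core_pa2]
  abel

lemma comm_ps2 : z6 * ps 2 = ps 2 * z6 := by
  rw [z6_def]
  simp only [sub_mul, add_mul, mul_sub, mul_add]
  rw [mul_orth loc_T1 loc_ps2 (by decide), mul_orth loc_T2 loc_ps2 (by decide),
    mul_orth loc_T4 loc_ps2 (by decide), mul_orth loc_T5 loc_ps2 (by decide),
    mul_orth loc_ps2 loc_T1 (by decide), mul_orth loc_ps2 loc_T2 (by decide),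
    mul_orth loc_ps2 loc_T3 (by decide), mul_orth loc_ps2 loc_T5 (by decide),
    eq_neg_of_add_eq_zero_left core_ps2]
  abel

lemma comm_pa3 : z6 * pa 3 = pa 3 * z6 := by
  rw [z6_def]
  simp only [sub_mul, add_mul, mul_sub, mul_add]
  rw [mul_orth loc_T1 loc_pa3 (by decide), mul_orth loc_T2 loc_pa3 (by decide),
    mul_orth loc_T3 loc_pa3 (by decide), mul_orth loc_T4 loc_pa3 (by decide),
    mul_orth loc_pa3 loc_T1 (by decide), mul_orth loc_pa3 loc_T2 (by decide),
    mul_orth loc_pa3 loc_T3 (by decide), mul_orth loc_pa3 loc_T5 (by decide),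
    eq_neg_of_add_eq_zero_left core_pa3]
  abel

lemma comm_ps3 : z6 * ps 3 = ps 3 * z6 := by
  rw [z6_def]
  simp only [sub_mul, add_mul, mul_sub, mul_add]
  rw [mul_orth loc_T1 loc_ps3 (by decide), mul_orth loc_T2 loc_ps3 (by decide),
    mul_orth loc_T3 loc_ps3 (by decide), mul_orth loc_T5 loc_ps3 (by decide),
    mul_orth loc_ps3 loc_T1 (by decide), mul_orth loc_ps3 loc_T2 (by decide),
    mul_orth loc_ps3 loc_T3 (by decide), mul_orth loc_ps3 loc_T4 (by decide),
    eq_neg_of_add_eq_zero_left core_ps3]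
  abel

lemma pa4T3 : pa 4 * T3 = 0 := by
  calc pa 4 * T3 = pa 4 * (px 4 * (px 2 * px 4)) := by
        simp only [T3]; noncomm_ring [nmul, muln]
  _ = 0 := a4x' _

lemma T3ps4 : T3 * ps 4 = 0 := by
  calc T3 * ps 4 = px 4 * (px 2 * (px 4 * ps 4)) := by
        simp only [T3]; noncomm_ring [nmul, muln]
  _ = 0 := by rw [xs4, mul_zero, mul_zero]

lemma comm_pa4 : z6 * pa 4 = pa 4 * z6 := by
  rw [z6_def]
  simp only [sub_mul, add_mul, mul_sub, mul_add]
  rw [mul_orth loc_T1 loc_pa4 (by decide), mul_orth loc_T2 loc_pa4 (by decide),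
    mul_orth loc_T3 loc_pa4 (by decide), mul_orth loc_T4 loc_pa4 (by decide),
    mul_orth loc_T5 loc_pa4 (by decide),
    mul_orth loc_pa4 loc_T1 (by decide), mul_orth loc_pa4 loc_T2 (by decide),
    mul_orth loc_pa4 loc_T4 (by decide), mul_orth loc_pa4 loc_T5 (by decide), pa4T3]

lemma comm_ps4 : z6 * ps 4 = ps 4 * z6 := by
  rw [z6_def]
  simp only [sub_mul, add_mul, mul_sub, mul_add]
  rw [mul_orth loc_T1 loc_ps4 (by decide), mul_orth loc_T2 loc_ps4 (by decide),
    mul_orth loc_T4 loc_ps4 (by decide), mul_orth loc_T5 loc_ps4 (by decide),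
    mul_orth loc_ps4 loc_T1 (by decide), mul_orth loc_ps4 loc_T2 (by decide),
    mul_orth loc_ps4 loc_T3 (by decide), mul_orth loc_ps4 loc_T4 (by decide),
    mul_orth loc_ps4 loc_T5 (by decide), T3ps4]

lemma comm_pa (i : Fin 5) : z6 * pa i = pa i * z6 := by
  fin_cases i
  exacts [comm_pa0, comm_pa1, comm_pa2, comm_pa3, comm_pa4]

lemma comm_ps (i : Fin 5) : z6 * ps i = ps i * z6 := by
  fin_cases i
  exacts [comm_ps0, comm_ps1, comm_ps2, comm_ps3, comm_ps4]

end E6C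

/-- The element `z₆` lies in the center of the preprojective algebra `Π(E₆)`. -/
theorem z6_mem_center : ∀ y : PiE6, z6 * y = y * z6 := by
  intro y
  obtain ⟨x, rfl⟩ := RingQuot.mkAlgHom_surjective ℂ E6.Rel y
  induction x using FreeAlgebra.induction with
  | grade0 r =>
    rw [AlgHom.commutes]
    exact (Algebra.commutes r z6).symm
  | grade1 g =>
    cases g with
    | e i => exact E6C.comm_pe i
    | a i => exact E6C.comm_pa i
    | astar i => exact E6C.comm_ps i
  | mul a b ha hb =>
    rw [map_mul, ← mul_assoc, ha, mul_assoc, hb, mul_assoc]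
  | add a b ha hb =>
    rw [map_add, mul_add, add_mul, ha, hb]
end

section
/- Let n ≥ 4 be even and let M be the (n+1)×(n+1) matrix over ℚ with rows and columns indexed by {1,…,n+1} defined by: M_{ij} = 2·min(i,j) if i, j ≤ n−1; M_{i,n} = M_{i,n+1} = M_{n,i} = M_{n+1,i} = i for i ≤ n−1; and M_{n,n} = M_{n,n+1} = M_{n+1,n} = M_{n+1,n+1} = n/2. Then the kernel {v ∈ ℚ^{n+1} : M·v = 0} is exactly the one-dimensional span of the vector e_n − e_{n+1}, where e_i denotes the i-th standard basis vector. -/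
/-!
The last two columns of `M` coincide, so `eₙ - eₙ₊₁` lies in the kernel. Conversely, let
`M v = 0` and put `s = vₙ + vₙ₊₁`. Since `min(i, j) = #{k ≤ i | k ≤ j}`, row `i < n` of `M v`
is `∑_{k ≤ i} (2 Tₖ + s)` with the tails `Tₖ = ∑_{k ≤ j < n} vⱼ`. So every tail equals `-s/2`,
that is `vⱼ = 0` for `j < n - 1` and `vₙ₋₁ = -s/2`, and row `n` becomes
`(n - 1) vₙ₋₁ + (n/2) s = s/2 = 0`.
-/

open Finset Matrix
open scoped Fin.NatCast

section Sequences

variable {G : Type*}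

theorem sum_range_min_succ_smul [AddCommMonoid G] (w : ℕ → G) (N i : ℕ) :
    ∑ j ∈ range N, min (i + 1) (j + 1) • w j = ∑ k ∈ range (i + 1), ∑ j ∈ Ico k N, w j := by
  induction i with
  | zero =>
    simp only [zero_add, range_one, sum_singleton, ← range_eq_Ico]
    exact sum_congr rfl fun j _ => by rw [Nat.min_eq_left (by omega), one_smul]
  | succ i ih =>
    have hmin (j : ℕ) :
        min (i + 1 + 1) (j + 1) = min (i + 1) (j + 1) + if i + 1 ≤ j then 1 else 0 := by
      split_ifs <;> omega
    have htail :
        ∑ j ∈ range N, (if i + 1 ≤ j then 1 else 0) • w j = ∑ j ∈ Ico (i + 1) N, w j := by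
      simp_rw [ite_smul, one_smul, zero_smul]
      rw [← sum_filter, range_eq_Ico, Ico_filter_le, Nat.zero_max]
    simp_rw [sum_range_succ _ (i + 1), ← ih, ← htail, ← sum_add_distrib, ← add_smul, hmin]

variable [AddCommGroup G]

theorem eq_zero_of_forall_sum_range_eq_zero {f : ℕ → G} {m : ℕ}
    (h : ∀ i ≤ m, ∑ k ∈ range (i + 1), f k = 0) : ∀ k ≤ m, f k = 0 := by
  intro k hk
  rw [← sum_range_succ_sub_sum f, h k hk]
  cases k with
  | zero => simp
  | succ k => rw [h k (by omega), sub_zero]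

theorem eq_zero_of_forall_sum_Ico_eq {w : ℕ → G} {m : ℕ} {c : G}
    (h : ∀ k ≤ m, ∑ j ∈ Ico k (m + 1), w j = c) : (∀ j < m, w j = 0) ∧ w m = c := by
  refine ⟨fun j hj => ?_, by simpa using h m le_rfl⟩
  have := h j hj.le
  rwa [sum_eq_sum_Ico_succ_bot (by omega), h (j + 1) hj, add_eq_right] at this

end Sequences

-- The equations `M v = 0` for `n = m + 2`, with `w j = v_{j+1}` (`j ≤ m`) and `s = vₙ + vₙ₊₁`.
theorem eq_zero_of_dynkinD_rows {m : ℕ} {w : ℕ → ℚ} {s : ℚ}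
    (hlong : ∀ i ≤ m,
      ∑ j ∈ range (m + 1), ((2 * min (i + 1) (j + 1) : ℕ) : ℚ) * w j + (i + 1) * s = 0)
    (hshort : ∑ j ∈ range (m + 1), (j + 1) * w j + (m + 2) / 2 * s = 0) :
    (∀ j ≤ m, w j = 0) ∧ s = 0 := by
  have hpartial : ∀ i ≤ m, ∑ k ∈ range (i + 1), (2 * ∑ j ∈ Ico k (m + 1), w j + s) = 0 := by
    intro i hi
    have hi := hlong i hi
    simp_rw [Nat.cast_mul, Nat.cast_ofNat, mul_assoc, ← mul_sum, ← nsmul_eq_mul,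
      sum_range_min_succ_smul] at hi
    simp only [sum_add_distrib, ← mul_sum, sum_const, card_range, nsmul_eq_mul]
    push_cast
    linear_combination hi
  have htails (k : ℕ) (hk : k ≤ m) : ∑ j ∈ Ico k (m + 1), w j = -s / 2 := by
    linear_combination eq_zero_of_forall_sum_range_eq_zero hpartial k hk / 2
  obtain ⟨hlow, htop⟩ := eq_zero_of_forall_sum_Ico_eq htails
  have hshort' : ((m : ℚ) + 1) * w m + (m + 2) / 2 * s = 0 := by
    rwa [sum_range_succ, sum_eq_zero fun j hj => by rw [hlow j (mem_range.1 hj), mul_zero],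
      zero_add] at hshort
  have hs : s = 0 := by linear_combination 2 * hshort' - (2 * m + 2) * htop
  refine ⟨fun j hj => ?_, hs⟩
  rcases hj.lt_or_eq with hj | rfl
  · exact hlow j hj
  · rw [htop, hs, neg_zero, zero_div]

theorem Matrix.mulVec_apply_eq_sum_range {R : Type*} [NonUnitalNonAssocSemiring R] {n : ℕ}
    [NeZero n] (A : Matrix (Fin n) (Fin n) R) (v : Fin n → R) (i : Fin n) :
    (A *ᵥ v) i = ∑ j ∈ range n, A i j * v j := by
  rw [mulVec, dotProduct, ← Fin.sum_univ_eq_sum_range (fun j : ℕ => A i j * v j) n]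
  simp only [Fin.cast_val_eq_self]

/-- The matrix `(dim eᵢ A eⱼ)` of the preprojective algebra `A` of type `D_{n+1}`, vertex `i + 1`
being indexed by `i : Fin (n + 1)`; vertices `n` and `n + 1` are the two short legs. -/
def dynkinDHilbertMatrix (n : ℕ) : Matrix (Fin (n + 1)) (Fin (n + 1)) ℚ :=
  of fun i j =>
    if (i : ℕ) + 1 ≤ n - 1 ∧ (j : ℕ) + 1 ≤ n - 1 then
      ((2 * min ((i : ℕ) + 1) ((j : ℕ) + 1) : ℕ) : ℚ)
    else if (i : ℕ) + 1 ≤ n - 1 then (((i : ℕ) + 1 : ℕ) : ℚ)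
    else if (j : ℕ) + 1 ≤ n - 1 then (((j : ℕ) + 1 : ℕ) : ℚ)
    else (n : ℚ) / 2

theorem dynkinDHilbertMatrix_natCast_natCast {n i j : ℕ} (hi : i < n + 1) (hj : j < n + 1) :
    dynkinDHilbertMatrix n i j =
      if i + 1 ≤ n - 1 ∧ j + 1 ≤ n - 1 then ((2 * min (i + 1) (j + 1) : ℕ) : ℚ)
      else if i + 1 ≤ n - 1 then ((i + 1 : ℕ) : ℚ)
      else if j + 1 ≤ n - 1 then ((j + 1 : ℕ) : ℚ)
      else (n : ℚ) / 2 := by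
  simp only [dynkinDHilbertMatrix, of_apply, Fin.val_cast_of_lt hi, Fin.val_cast_of_lt hj]

theorem dynkinDHilbertMatrix_col_pred_eq_col (n : ℕ) :
    (dynkinDHilbertMatrix n).col ⟨n - 1, n.sub_lt_succ 1⟩ =
      (dynkinDHilbertMatrix n).col (Fin.last n) := by
  ext i
  have hpred : ¬(n - 1 + 1 ≤ n - 1) := by omega
  have hlast : ¬(n + 1 ≤ n - 1) := by omega
  simp only [col_apply, dynkinDHilbertMatrix, of_apply, Fin.val_last, hpred, hlast, and_false,
    if_false]

theorem dynkinDHilbertMatrix_mulVec_single_sub_single (n : ℕ) :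
    dynkinDHilbertMatrix n *ᵥ (Pi.single ⟨n - 1, n.sub_lt_succ 1⟩ 1 - Pi.single (Fin.last n) 1) =
      0 := by
  rw [mulVec_sub, mulVec_single_one, mulVec_single_one, dynkinDHilbertMatrix_col_pred_eq_col,
    sub_self]

theorem dynkinDHilbertMatrix_mulVec_apply_of_le {m : ℕ} (v : Fin (m + 3) → ℚ) {i : ℕ}
    (hi : i ≤ m) :
    (dynkinDHilbertMatrix (m + 2) *ᵥ v) i =
      ∑ j ∈ range (m + 1), ((2 * min (i + 1) (j + 1) : ℕ) : ℚ) * v j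
        + (i + 1) * (v ↑(m + 1) + v ↑(m + 2)) := by
  rw [mulVec_apply_eq_sum_range, sum_range_succ, sum_range_succ, add_assoc, mul_add,
    dynkinDHilbertMatrix_natCast_natCast (by omega) (by omega), if_neg (by omega),
    if_pos (by omega), dynkinDHilbertMatrix_natCast_natCast (by omega) (by omega),
    if_neg (by omega), if_pos (by omega)]
  refine congrArg₂ _ (sum_congr rfl fun j hj => ?_) (by push_cast; ring)
  replace hj := mem_range.1 hj
  rw [dynkinDHilbertMatrix_natCast_natCast (by omega) (by omega),
    if_pos ⟨by omega, by omega⟩]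

theorem dynkinDHilbertMatrix_mulVec_apply_succ {m : ℕ} (v : Fin (m + 3) → ℚ) :
    (dynkinDHilbertMatrix (m + 2) *ᵥ v) ↑(m + 1) =
      ∑ j ∈ range (m + 1), (j + 1) * v j + (m + 2) / 2 * (v ↑(m + 1) + v ↑(m + 2)) := by
  rw [mulVec_apply_eq_sum_range, sum_range_succ, sum_range_succ, add_assoc, mul_add,
    dynkinDHilbertMatrix_natCast_natCast (by omega) (by omega), if_neg (by omega),
    if_neg (by omega), if_neg (by omega),
    dynkinDHilbertMatrix_natCast_natCast (by omega) (by omega), if_neg (by omega),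
    if_neg (by omega), if_neg (by omega)]
  refine congrArg₂ _ (sum_congr rfl fun j hj => ?_) (by push_cast; ring)
  replace hj := mem_range.1 hj
  rw [dynkinDHilbertMatrix_natCast_natCast (by omega) (by omega),
    if_neg (by omega), if_neg (by omega), if_pos (by omega)]
  push_cast
  ring

theorem eq_smul_of_dynkinDHilbertMatrix_mulVec_eq_zero {m : ℕ} {v : Fin (m + 3) → ℚ}
    (hv : dynkinDHilbertMatrix (m + 2) *ᵥ v = 0) :
    v = v ⟨m + 1, by omega⟩ •
      (Pi.single ⟨m + 1, by omega⟩ 1 - Pi.single ⟨m + 2, by omega⟩ 1) := by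
  obtain ⟨hlong, hsum⟩ := eq_zero_of_dynkinD_rows (w := fun j => v j)
    (fun i hi => by rw [← dynkinDHilbertMatrix_mulVec_apply_of_le v hi, hv, Pi.zero_apply])
    (by rw [← dynkinDHilbertMatrix_mulVec_apply_succ, hv, Pi.zero_apply])
  simp only [Fin.natCast_eq_mk (show m + 1 < m + 3 by omega),
    Fin.natCast_eq_mk (show m + 2 < m + 3 by omega)] at hsum
  ext ⟨i, hi⟩
  rcases (by omega : i ≤ m ∨ i = m + 1 ∨ i = m + 2) with hle | rfl | rfl
  · have hvi := hlong i hle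
    simp only [Fin.natCast_eq_mk hi] at hvi
    simp [hvi, show i ≠ m + 1 by omega, show i ≠ m + 2 by omega]
  · simp
  · rw [Pi.smul_apply, Pi.sub_apply, Pi.single_eq_same, Pi.single_eq_of_ne (by simp),
      smul_eq_mul]
    linear_combination hsum

theorem ker_dynkinDHilbertMatrix_mulVecLin {n : ℕ} (hn : 2 ≤ n) :
    LinearMap.ker (dynkinDHilbertMatrix n).mulVecLin =
      Submodule.span ℚ {Pi.single (⟨n - 1, n.sub_lt_succ 1⟩ : Fin (n + 1)) (1 : ℚ)
        - Pi.single (Fin.last n) 1} := by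
  obtain ⟨m, rfl⟩ := Nat.exists_eq_add_of_le' hn
  refine le_antisymm (fun v hv => ?_) ?_
  · exact Submodule.mem_span_singleton.2
      ⟨_, (eq_smul_of_dynkinDHilbertMatrix_mulVec_eq_zero hv).symm⟩
  · rw [Submodule.span_singleton_le_iff_mem]
    exact dynkinDHilbertMatrix_mulVec_single_sub_single (m + 2)

/-- For even `n ≥ 4`, the matrix `M` (with rows and columns indexed by `{1, …, n+1}`,
realized as `Fin (n+1)` with `i ↦ i+1`) given by `M i j = 2·min i j` for `i, j ≤ n−1`,
`M i n = M i (n+1) = M n i = M (n+1) i = i` for `i ≤ n−1`, and `M i j = n/2` for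
`i, j ∈ {n, n+1}`, has kernel exactly the one-dimensional span of `eₙ − e_{n+1}`. -/
theorem kernel_hilbert_matrix_Dn_even
    (n : ℕ) (hn : 4 ≤ n)
    (M : Matrix (Fin (n + 1)) (Fin (n + 1)) ℚ)
    (hM : ∀ i j : Fin (n + 1), M i j =
      if (i : ℕ) + 1 ≤ n - 1 ∧ (j : ℕ) + 1 ≤ n - 1 then
        ((2 * min ((i : ℕ) + 1) ((j : ℕ) + 1) : ℕ) : ℚ)
      else if (i : ℕ) + 1 ≤ n - 1 then (((i : ℕ) + 1 : ℕ) : ℚ)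
      else if (j : ℕ) + 1 ≤ n - 1 then (((j : ℕ) + 1 : ℕ) : ℚ)
      else (n : ℚ) / 2) :
    LinearMap.ker M.mulVecLin =
      Submodule.span ℚ
        {Pi.single (⟨n - 1, by omega⟩ : Fin (n + 1)) (1 : ℚ)
          - Pi.single (⟨n, by omega⟩ : Fin (n + 1)) (1 : ℚ)} ∧
    Module.finrank ℚ (LinearMap.ker M.mulVecLin) = 1 := by
  obtain rfl : M = dynkinDHilbertMatrix n := ext hM
  have hker := ker_dynkinDHilbertMatrix_mulVecLin (by omega : 2 ≤ n)
  refine ⟨hker, ?_⟩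
  rw [hker, finrank_span_singleton fun h => ?_]
  simpa [Pi.single_apply, Fin.ext_iff, show n - 1 ≠ n by omega] using congrFun h ⟨n - 1, by omega⟩
end

section
/- Let n ≥ 3 be odd and let M be the (n+1)×(n+1) matrix over ℚ with rows and columns indexed by {1,…,n+1} defined by: for k, j ≤ n−1, M_{kj} = 2 if k and j are both odd and M_{kj} = 0 otherwise; for k ≤ n−1, M_{k,n} = M_{k,n+1} = M_{n,k} = M_{n+1,k} = 1 if k is odd and 0 if k is even; M_{n,n} = M_{n+1,n+1} = (n+1)/2; and M_{n,n+1} = M_{n+1,n} = −(n−1)/2. Then the kernel {v ∈ ℚ^{n+1} : M·v = 0} is exactly the span of the vectors e_j − e_1 for odd j with 3 ≤ j ≤ n−2, the vectors e_j for even j with 2 ≤ j ≤ n−1, and the vector e_n + e_{n+1} − e_1; in particular this kernel has dimension n−1. -/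
/-!
Every row of `M` is a combination of the two forms `s(v) + vₙ` and `vₙ - vₙ₊₁`, where `s(v)` is
the sum of the coordinates with odd label `≤ n - 1`: `M = C N` for the `2 × (n + 1)` matrix `N`
of these forms. The rows `n` and `n + 1` of `C` form a `2 × 2` block of determinant `-n`, so `C`
is injective and `ker M = ker N`. Since `N` is onto `ℚ²`, this kernel has dimension `n - 1`.
The listed vectors lie in `ker N` and, together with `e₁` and `eₙ₊₁`, span `ℚⁿ⁺¹` (this uses
that `n` is odd, so that every odd label `3 ≤ j ≤ n - 1` is `≤ n - 2`), while `ker N` meets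
`span {e₁, eₙ₊₁}` trivially; the modular law then identifies their span with `ker N`.
-/

/-- The `j`-th standard basis vector of `ℚ^{n+1}` (with `1`-indexed label `j`, realized
on `Fin (n+1)` via `k ↦ k+1`). -/
def stdVec (n j : ℕ) : Fin (n + 1) → ℚ := fun k => if (k : ℕ) + 1 = j then 1 else 0

open Matrix

namespace SignedDnMatrix

variable {n : ℕ}

/-- The index of the coordinate with (`1`-based) label `n`. -/
def penult (n : ℕ) : Fin (n + 1) := ⟨n - 1, by omega⟩

theorem stdVec_eq_single {j : ℕ} (k : Fin (n + 1)) (hk : (k : ℕ) + 1 = j) :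
    stdVec n j = Pi.single k 1 := by
  subst hk
  ext i
  simp [stdVec, Pi.single_apply, Fin.ext_iff]

def signedMatrix (n : ℕ) : Matrix (Fin (n + 1)) (Fin (n + 1)) ℚ :=
  Matrix.of fun i j =>
    if (i : ℕ) + 1 ≤ n - 1 ∧ (j : ℕ) + 1 ≤ n - 1 then
      (if Odd ((i : ℕ) + 1) ∧ Odd ((j : ℕ) + 1) then 2 else 0)
    else if (i : ℕ) + 1 ≤ n - 1 then (if Odd ((i : ℕ) + 1) then 1 else 0)
    else if (j : ℕ) + 1 ≤ n - 1 then (if Odd ((j : ℕ) + 1) then 1 else 0)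
    else if (i : ℕ) = (j : ℕ) then ((n : ℚ) + 1) / 2 else -(((n : ℚ) - 1) / 2)

def oddIndicator (n : ℕ) : Fin (n + 1) → ℚ :=
  fun k => if (k : ℕ) + 1 ≤ n - 1 ∧ Odd ((k : ℕ) + 1) then 1 else 0

def kerForms (n : ℕ) : Matrix (Fin 2) (Fin (n + 1)) ℚ :=
  Matrix.of ![oddIndicator n + Pi.single (penult n) 1,
    Pi.single (penult n) 1 - Pi.single (Fin.last n) 1]

def rowCoeffs (n : ℕ) : Matrix (Fin (n + 1)) (Fin 2) ℚ :=
  Matrix.of fun i =>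
    if (i : ℕ) + 1 ≤ n - 1 then (if Odd ((i : ℕ) + 1) then ![2, -1] else 0)
    else if i = penult n then ![1, ((n : ℚ) - 1) / 2] else ![1, -(((n : ℚ) + 1) / 2)]

theorem signedMatrix_eq_rowCoeffs_mul_kerForms (hn : n ≠ 0) :
    signedMatrix n = rowCoeffs n * kerForms n := by
  ext i j
  have := j.isLt
  simp only [mul_apply, Fin.sum_univ_two, kerForms, of_apply, cons_val_zero, cons_val_one,
    Pi.add_apply, Pi.sub_apply, Pi.single_apply, oddIndicator, signedMatrix, rowCoeffs, penult,
    Fin.ext_iff, Fin.val_last, Nat.odd_iff]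
  split_ifs <;> simp only [cons_val_zero, cons_val_one, Pi.zero_apply] <;>
    first | (exfalso; omega) | ring

theorem rowCoeffs_penult : rowCoeffs n (penult n) = ![1, ((n : ℚ) - 1) / 2] := by
  ext t; fin_cases t <;> simp [rowCoeffs, penult]

theorem rowCoeffs_last (hn : n ≠ 0) :
    rowCoeffs n (Fin.last n) = ![1, -(((n : ℚ) + 1) / 2)] := by
  have h : ¬n < n - 1 ∧ n ≠ n - 1 := by omega
  ext t; fin_cases t <;> simp [rowCoeffs, penult, Fin.ext_iff, h]

theorem ker_mulVecLin_rowCoeffs (hn : n ≠ 0) :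
    LinearMap.ker (rowCoeffs n).mulVecLin = ⊥ := by
  rw [LinearMap.ker_eq_bot']
  intro x hx
  have hp := congrFun hx (penult n)
  have hq := congrFun hx (Fin.last n)
  simp only [mulVecLin_apply, mulVec, rowCoeffs_penult, rowCoeffs_last hn, dotProduct,
    Fin.sum_univ_two, cons_val_zero, cons_val_one, Pi.zero_apply] at hp hq
  have h1 : x 1 = 0 := by
    have : (n : ℚ) * x 1 = 0 := by linear_combination hp - hq
    simpa [hn] using this
  have h0 : x 0 = 0 := by linear_combination hp - ((n : ℚ) - 1) / 2 * h1
  ext t; fin_cases t <;> assumption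

theorem kerForms_mulVec (v : Fin (n + 1) → ℚ) :
    kerForms n *ᵥ v = ![oddIndicator n ⬝ᵥ v + v (penult n), v (penult n) - v (Fin.last n)] := by
  ext t; fin_cases t <;>
    simp only [mulVec, kerForms, of_apply, Fin.zero_eta, Fin.mk_one, cons_val_zero, cons_val_one,
      add_dotProduct, sub_dotProduct, single_one_dotProduct]

theorem mem_ker_kerForms {v : Fin (n + 1) → ℚ} :
    v ∈ LinearMap.ker (kerForms n).mulVecLin ↔
      oddIndicator n ⬝ᵥ v + v (penult n) = 0 ∧ v (penult n) = v (Fin.last n) := by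
  simp [kerForms_mulVec, funext_iff, Fin.forall_fin_two, sub_eq_zero]

theorem finrank_ker_kerForms (hn : n ≠ 0) :
    Module.finrank ℚ (LinearMap.ker (kerForms n).mulVecLin) = n - 1 := by
  have hsurj : Function.Surjective (kerForms n).mulVecLin := by
    intro y
    refine ⟨y 0 • Pi.single (penult n) 1 + (y 0 - y 1) • Pi.single (Fin.last n) 1, ?_⟩
    have hn' : ¬n < n - 1 ∧ n - 1 ≠ n ∧ n ≠ n - 1 := by omega
    ext t; fin_cases t <;> simp [kerForms_mulVec, oddIndicator, penult, Fin.ext_iff, hn']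
  have := LinearMap.finrank_range_add_finrank_ker (kerForms n).mulVecLin
  rw [LinearMap.range_eq_top.2 hsurj, finrank_top, Module.finrank_fin_fun,
    Module.finrank_fin_fun] at this
  omega

def kernelGens (n : ℕ) : Set (Fin (n + 1) → ℚ) :=
  {v | ∃ j : ℕ, Odd j ∧ 3 ≤ j ∧ j ≤ n - 2 ∧ v = stdVec n j - stdVec n 1}
    ∪ {v | ∃ j : ℕ, Even j ∧ 2 ≤ j ∧ j ≤ n - 1 ∧ v = stdVec n j}
    ∪ {stdVec n n + stdVec n (n + 1) - stdVec n 1}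

theorem oddIndicator_dotProduct_stdVec (j : ℕ) :
    oddIndicator n ⬝ᵥ stdVec n j = if j ≤ n - 1 ∧ Odd j then 1 else 0 := by
  by_cases hj : 1 ≤ j ∧ j ≤ n + 1
  · rw [stdVec_eq_single ⟨j - 1, by omega⟩ (by simp; omega), dotProduct_single, mul_one,
      oddIndicator, Fin.val_mk, Nat.sub_add_cancel hj.1]
  · have hzero : stdVec n j = 0 := by
      ext k
      simp only [stdVec, Pi.zero_apply, ite_eq_right_iff]
      omega
    rw [hzero, dotProduct_zero, if_neg]
    rintro ⟨h, ho⟩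
    have := ho.pos
    omega

theorem span_kernelGens_le_ker (hn : 2 ≤ n) :
    Submodule.span ℚ (kernelGens n) ≤ LinearMap.ker (kerForms n).mulVecLin := by
  rw [Submodule.span_le]
  rintro _ ((⟨_, ⟨m, rfl⟩, h3, hjn, rfl⟩ | ⟨_, ⟨m, rfl⟩, h2, hjn, rfl⟩) | rfl) <;>
    simp only [SetLike.mem_coe, mem_ker_kerForms, dotProduct_add, dotProduct_sub,
      oddIndicator_dotProduct_stdVec, Pi.add_apply, Pi.sub_apply, stdVec, penult, Fin.val_last,
      Fin.val_mk, Nat.sub_add_cancel (by omega : 1 ≤ n), Nat.odd_iff, and_true] <;>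
    split_ifs <;> first | (exfalso; omega) | norm_num

theorem disjoint_ker_kerForms (hn : 2 ≤ n) :
    Disjoint (LinearMap.ker (kerForms n).mulVecLin)
      (Submodule.span ℚ {Pi.single 0 1, Pi.single (Fin.last n) 1}) := by
  rw [Submodule.disjoint_def]
  rintro _ hker hpair
  obtain ⟨c, d, rfl⟩ := Submodule.mem_span_pair.1 hpair
  rw [mem_ker_kerForms] at hker
  have hn' : 1 ≤ n - 1 ∧ n - 1 ≠ 0 ∧ n - 1 ≠ n ∧ ¬n < n - 1 ∧ n ≠ 0 := by omega
  obtain ⟨rfl, rfl⟩ : c = 0 ∧ 0 = d := by simpa [oddIndicator, penult, Fin.ext_iff, hn'] using hker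
  simp

theorem codisjoint_span_kernelGens (hno : Odd n) :
    Codisjoint (Submodule.span ℚ (kernelGens n))
      (Submodule.span ℚ {Pi.single 0 1, Pi.single (Fin.last n) 1}) := by
  rw [codisjoint_iff, eq_top_iff, ← (Pi.basisFun ℚ (Fin (n + 1))).span_eq, Submodule.span_le]
  rintro _ ⟨k, rfl⟩
  rw [Pi.basisFun_apply, SetLike.mem_coe]
  set T := Submodule.span ℚ (kernelGens n) ⊔
    Submodule.span ℚ {Pi.single 0 1, Pi.single (Fin.last n) 1}
  have hW {v} (hv : v ∈ kernelGens n) : v ∈ T := Submodule.mem_sup_left (Submodule.subset_span hv)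
  have h0 : Pi.single 0 1 ∈ T := Submodule.mem_sup_right (Submodule.subset_span (by simp))
  have hlast : Pi.single (Fin.last n) 1 ∈ T :=
    Submodule.mem_sup_right (Submodule.subset_span (by simp))
  have hk := k.isLt
  have hn := Nat.odd_iff.1 hno
  obtain hk0 | hkl | hkp | hke | hko : (k : ℕ) = 0 ∨ (k : ℕ) = n ∨ (k : ℕ) = n - 1 ∨
      (((k : ℕ) + 1) % 2 = 0 ∧ (k : ℕ) + 1 ≤ n - 1) ∨
      (((k : ℕ) + 1) % 2 = 1 ∧ 3 ≤ (k : ℕ) + 1 ∧ (k : ℕ) + 1 ≤ n - 2) := by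
    omega
  · rwa [show k = 0 from Fin.ext hk0]
  · rwa [show k = Fin.last n from Fin.ext hkl]
  · have hg : stdVec n n + stdVec n (n + 1) - stdVec n 1 ∈ kernelGens n := Or.inr rfl
    rw [stdVec_eq_single k (by omega), stdVec_eq_single (j := n + 1) (Fin.last n) rfl,
      stdVec_eq_single (j := 1) 0 rfl] at hg
    convert T.add_mem (T.sub_mem (hW hg) hlast) h0 using 1
    abel
  · refine hW (Or.inl (Or.inr ⟨k + 1, Nat.even_iff.2 hke.1, by omega, hke.2, ?_⟩))
    exact (stdVec_eq_single k rfl).symm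
  · have hg : stdVec n (k + 1) - stdVec n 1 ∈ kernelGens n :=
      Or.inl (Or.inl ⟨k + 1, Nat.odd_iff.2 hko.1, hko.2.1, hko.2.2, rfl⟩)
    rw [stdVec_eq_single k rfl, stdVec_eq_single (j := 1) 0 rfl] at hg
    convert T.add_mem (hW hg) h0 using 1
    abel

end SignedDnMatrix

open SignedDnMatrix in
/-- For odd `n ≥ 3`, the matrix `M` (rows and columns indexed by `{1, …, n+1}`) with
`M k j = 2` if `k, j ≤ n−1` are both odd and `0` otherwise for `k, j ≤ n−1`;
`M k n = M k (n+1) = M n k = M (n+1) k = 1` for odd `k ≤ n−1` and `0` for even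
`k ≤ n−1`; `M n n = M (n+1) (n+1) = (n+1)/2` and `M n (n+1) = M (n+1) n = −(n−1)/2`,
has kernel exactly the span of the `e_j − e₁` for odd `3 ≤ j ≤ n−2`, the `e_j` for
even `2 ≤ j ≤ n−1`, and `eₙ + e_{n+1} − e₁`; in particular the kernel has
dimension `n − 1`. -/
theorem kernel_signed_matrix_Dn_odd
    (n : ℕ) (hn : 3 ≤ n) (hno : Odd n)
    (M : Matrix (Fin (n + 1)) (Fin (n + 1)) ℚ)
    (hM : ∀ i j : Fin (n + 1), M i j =
      if (i : ℕ) + 1 ≤ n - 1 ∧ (j : ℕ) + 1 ≤ n - 1 then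
        (if Odd ((i : ℕ) + 1) ∧ Odd ((j : ℕ) + 1) then 2 else 0)
      else if (i : ℕ) + 1 ≤ n - 1 then (if Odd ((i : ℕ) + 1) then 1 else 0)
      else if (j : ℕ) + 1 ≤ n - 1 then (if Odd ((j : ℕ) + 1) then 1 else 0)
      else if (i : ℕ) = (j : ℕ) then ((n : ℚ) + 1) / 2 else -(((n : ℚ) - 1) / 2)) :
    LinearMap.ker M.mulVecLin =
      Submodule.span ℚ
        ({v | ∃ j : ℕ, Odd j ∧ 3 ≤ j ∧ j ≤ n - 2 ∧ v = stdVec n j - stdVec n 1}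
          ∪ {v | ∃ j : ℕ, Even j ∧ 2 ≤ j ∧ j ≤ n - 1 ∧ v = stdVec n j}
          ∪ {stdVec n n + stdVec n (n + 1) - stdVec n 1}) ∧
    Module.finrank ℚ (LinearMap.ker M.mulVecLin) = n - 1 := by
  have hM' : M = signedMatrix n := Matrix.ext hM
  have hker : LinearMap.ker M.mulVecLin = LinearMap.ker (kerForms n).mulVecLin := by
    rw [hM', signedMatrix_eq_rowCoeffs_mul_kerForms (by omega), mulVecLin_mul,
      LinearMap.ker_comp_of_ker_eq_bot _ (ker_mulVecLin_rowCoeffs (by omega))]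
  rw [hker]
  refine ⟨?_, finrank_ker_kerForms (by omega)⟩
  have hspan := span_kernelGens_le_ker (n := n) (by omega)
  exact ((le_iff_eq_of_codisjoint_of_disjoint (codisjoint_span_kernelGens hno)
    (disjoint_ker_kerForms (by omega)).symm).1 hspan).symm
end

section
/- Let n ≥ 3 be odd, set m = n − 1, and let B be the m×m matrix over ℚ with rows and columns indexed by {1,…,m} defined by: B_{ij} = −n if i is odd, j is even and i < j; B_{ij} = n if i is even, j is odd and j < i; and B_{ij} = 0 otherwise. Let T be the m×m tridiagonal matrix with T_{i,i+1} = 1, T_{i+1,i} = −1 and all other entries 0. Then B·T = n·I, i.e. B = n·T^{-1}; in particular B is invertible and skew-symmetric. -/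
/-- For odd `n ≥ 3` and `m = n − 1`, let `B` be the `m×m` matrix (rows and columns
`1`-indexed) with `B i j = −n` if `i` odd, `j` even, `i < j`; `B i j = n` if `i` even,
`j` odd, `j < i`; and `0` otherwise, and let `T` be the tridiagonal matrix with
`T i (i+1) = 1`, `T (i+1) i = −1` and all other entries `0`. Then `B·T = n·I`, i.e.
`B = n·T⁻¹`; in particular `B` is invertible and skew-symmetric. -/
theorem Mbeta_Dn_odd
    (n : ℕ) (hn : 3 ≤ n) (hno : Odd n) (m : ℕ) (hm : m = n - 1)
    (B T : Matrix (Fin m) (Fin m) ℚ)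
    (hB : ∀ i j : Fin m, B i j =
      if Odd ((i : ℕ) + 1) ∧ Even ((j : ℕ) + 1) ∧ (i : ℕ) + 1 < (j : ℕ) + 1 then
        -(n : ℚ)
      else if Even ((i : ℕ) + 1) ∧ Odd ((j : ℕ) + 1) ∧ (j : ℕ) + 1 < (i : ℕ) + 1 then
        (n : ℚ)
      else 0)
    (hT : ∀ i j : Fin m, T i j =
      if (j : ℕ) = (i : ℕ) + 1 then 1 else if (i : ℕ) = (j : ℕ) + 1 then -1 else 0) :
    B * T = (n : ℚ) • (1 : Matrix (Fin m) (Fin m) ℚ) ∧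
    B = (n : ℚ) • T⁻¹ ∧ IsUnit B ∧ B.transpose = -B := by
  have hn2 : n % 2 = 1 := Nat.odd_iff.mp hno
  have hnq : (n : ℚ) ≠ 0 := by
    exact_mod_cast (by omega : n ≠ 0)
  have key : B * T = (n : ℚ) • (1 : Matrix (Fin m) (Fin m) ℚ) := by
    ext i j
    have hi := i.isLt
    have hj := j.isLt
    rw [Matrix.mul_apply]
    have hsplit : ∀ k : Fin m, B i k * T k j =
        (if (k : ℕ) + 1 = (j : ℕ) then B i k else 0)
        + (if (k : ℕ) = (j : ℕ) + 1 then -(B i k) else 0) := by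
      intro k
      rw [hT k j]
      split_ifs <;> first | ring1 | (exfalso; omega)
    rw [Finset.sum_congr rfl fun k _ => hsplit k, Finset.sum_add_distrib]
    have hsum1 : (∑ k : Fin m, if (k : ℕ) + 1 = (j : ℕ) then B i k else 0)
        = if h : 1 ≤ (j : ℕ) then B i ⟨(j : ℕ) - 1, by omega⟩ else 0 := by
      split_ifs with h
      · rw [Finset.sum_eq_single (⟨(j : ℕ) - 1, by omega⟩ : Fin m)]
        · rw [if_pos (by simp; omega)]
        · intro k _ hk
          rw [if_neg]
          intro hc
          exact hk (Fin.ext (show (k : ℕ) = (j : ℕ) - 1 by omega))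
        · simp
      · apply Finset.sum_eq_zero
        intro k _
        rw [if_neg]
        omega
    have hsum2 : (∑ k : Fin m, if (k : ℕ) = (j : ℕ) + 1 then -(B i k) else 0)
        = if h : (j : ℕ) + 1 < m then -(B i ⟨(j : ℕ) + 1, h⟩) else 0 := by
      split_ifs with h
      · rw [Finset.sum_eq_single (⟨(j : ℕ) + 1, h⟩ : Fin m)]
        · rw [if_pos (by simp)]
        · intro k _ hk
          rw [if_neg]
          intro hc
          exact hk (Fin.ext (show (k : ℕ) = (j : ℕ) + 1 from hc))
        · simp
      · apply Finset.sum_eq_zero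
        intro k _
        rw [if_neg]
        omega
    rw [hsum1, hsum2]
    simp only [Matrix.smul_apply, Matrix.one_apply, smul_eq_mul, Fin.ext_iff]
    have hm2 : 2 ≤ m := by omega
    by_cases h1 : 1 ≤ (j : ℕ)
    · by_cases h2 : (j : ℕ) + 1 < m
      · rw [dif_pos h1, dif_pos h2, hB, hB]
        simp only [Nat.odd_iff, Nat.even_iff, Fin.val_mk]
        split_ifs <;> first | ring1 | (exfalso; omega)
      · rw [dif_pos h1, dif_neg h2, hB]
        simp only [Nat.odd_iff, Nat.even_iff, Fin.val_mk]
        split_ifs <;> first | ring1 | (exfalso; omega)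
    · by_cases h2 : (j : ℕ) + 1 < m
      · rw [dif_neg h1, dif_pos h2, hB]
        simp only [Nat.odd_iff, Nat.even_iff, Fin.val_mk]
        split_ifs <;> first | ring1 | (exfalso; omega)
      · exfalso; omega
  have hC : ((n : ℚ)⁻¹ • B) * T = 1 := by
    rw [Matrix.smul_mul, key, smul_smul, inv_mul_cancel₀ hnq, one_smul]
  have hTinv : T⁻¹ = (n : ℚ)⁻¹ • B := Matrix.inv_eq_left_inv hC
  have hBeq : B = (n : ℚ) • T⁻¹ := by
    rw [hTinv, smul_smul, mul_inv_cancel₀ hnq, one_smul]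
  have h1 : B * ((n : ℚ)⁻¹ • T) = 1 := by
    rw [Matrix.mul_smul, key, smul_smul, inv_mul_cancel₀ hnq, one_smul]
  have h2 : ((n : ℚ)⁻¹ • T) * B = 1 := mul_eq_one_comm.mp h1
  refine ⟨key, hBeq, ⟨⟨B, (n : ℚ)⁻¹ • T, h1, h2⟩, rfl⟩, ?_⟩
  ext i j
  rw [Matrix.transpose_apply, Matrix.neg_apply, hB j i, hB i j]
  simp only [Nat.odd_iff, Nat.even_iff]
  split_ifs <;> first | ring1 | (exfalso; omega)
end
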